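/- Let f : ℝ × ℝ × ℝ × ℝ → ℝ, let δ ≠ 0 and σ ≠ 0 be real constants, and let u₀, v₀ ∈ ℝ. Let h > 0, λ > 0 and set h* := λ^σ h. If u : ℝ → ℝ is three times differentiable and satisfies the extended equation with parameter h, i.e. u'''(x) = h^{(1−3δ)/σ} f(h^{−δ/σ} x, h^{−1/σ} u(x), h^{(δ−1)/σ} u'(x), h^{(2δ−1)/σ} u''(x)) for all x ≥ 0, together with the extended initial conditions u(0) = h^{1/σ} u₀ and u'(0) = h^{(1−δ)/σ} v₀, then the scaled function u*(x) := λ · u(λ^{−δ} x) satisfies the extended equation with parameter h* for all x ≥ 0 and the extended initial conditions u*(0) = h*^{1/σ} u₀ and u*'(0) = h*^{(1−δ)/σ} v₀. Moreover, if u'(x) → L as x → ∞, then u*'(x) → λ^{1−δ} L as x → ∞. -/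
import Mathlib


open Real Filter Topology

lemma deriv_scale (g : ℝ → ℝ) (hg : Differentiable ℝ g) (a c : ℝ) :
    deriv (fun x => a * g (c * x)) = fun x => a * c * deriv g (c * x) := by
  funext x
  have h1 : HasDerivAt (fun x : ℝ => c * x) c x := by
    simpa using (hasDerivAt_id x).const_mul c
  have h2 := (((hg (c * x)).hasDerivAt.comp x h1).const_mul a)
  have h3 : HasDerivAt (fun x => a * g (c * x)) (a * c * deriv g (c * x)) x := by
    simpa [Function.comp, mul_comm, mul_assoc, mul_left_comm] using h2
  exact h3.deriv

/-- `u` is three times differentiable. -/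
def ThreeDiff (u : ℝ → ℝ) : Prop :=
  Differentiable ℝ u ∧ Differentiable ℝ (deriv u) ∧ Differentiable ℝ (deriv (deriv u))

/-- The extended equation with parameter `h` (powers are real powers of the positive real `h`). -/
def ExtEq (f : ℝ × ℝ × ℝ × ℝ → ℝ) (δ σ h : ℝ) (u : ℝ → ℝ) : Prop :=
  ∀ x : ℝ, 0 ≤ x → deriv (deriv (deriv u)) x =
    h ^ ((1 - 3 * δ) / σ) *
      f (h ^ (-δ / σ) * x, h ^ (-1 / σ) * u x,
         h ^ ((δ - 1) / σ) * deriv u x, h ^ ((2 * δ - 1) / σ) * deriv (deriv u) x)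

theorem stmt0 (f : ℝ × ℝ × ℝ × ℝ → ℝ) (δ σ : ℝ) (hδ : δ ≠ 0) (hσ : σ ≠ 0)
    (u₀ v₀ : ℝ) (h lam hstar : ℝ) (hh : 0 < h) (hlam : 0 < lam)
    (hhstar : hstar = lam ^ σ * h)
    (u : ℝ → ℝ) (hu : ThreeDiff u)
    (heq : ExtEq f δ σ h u)
    (hic1 : u 0 = h ^ (1 / σ) * u₀)
    (hic2 : deriv u 0 = h ^ ((1 - δ) / σ) * v₀)
    (ustar : ℝ → ℝ) (hustar : ustar = fun x => lam * u (lam ^ (-δ) * x)) :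
    ExtEq f δ σ hstar ustar ∧
    ustar 0 = hstar ^ (1 / σ) * u₀ ∧
    deriv ustar 0 = hstar ^ ((1 - δ) / σ) * v₀ ∧
    (∀ L : ℝ, Tendsto (deriv u) atTop (𝓝 L) →
      Tendsto (deriv ustar) atTop (𝓝 (lam ^ (1 - δ) * L))) := by
  set c : ℝ := lam ^ (-δ) with hc
  have hc0 : 0 < c := rpow_pos_of_pos hlam _
  have d1 : deriv ustar = fun x => lam * c * deriv u (c * x) := by
    rw [hustar]; exact deriv_scale u hu.1 lam c
  have d2 : deriv (deriv ustar) = fun x => lam * c * c * deriv (deriv u) (c * x) := by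
    rw [d1, deriv_scale (deriv u) hu.2.1 (lam * c) c]
  have d3 : deriv (deriv (deriv ustar)) =
      fun x => lam * c * c * c * deriv (deriv (deriv u)) (c * x) := by
    rw [d2, deriv_scale (deriv (deriv u)) hu.2.2 (lam * c * c) c]
  have hpow : ∀ p : ℝ, hstar ^ p = lam ^ (σ * p) * h ^ p := by
    intro p
    rw [hhstar, mul_rpow (rpow_pos_of_pos hlam σ).le hh.le, ← Real.rpow_mul hlam.le]
  have lpow : ∀ a b : ℝ, lam ^ a * lam ^ b = lam ^ (a + b) :=
    fun a b => (Real.rpow_add hlam a b).symm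
  have lpow1 : ∀ b : ℝ, lam * lam ^ b = lam ^ (1 + b) := fun b => by
    rw [Real.rpow_add hlam, Real.rpow_one]
  have e1 : σ * (-δ / σ) = -δ := by field_simp; try ring
  have e2 : σ * (-1 / σ) = -1 := by field_simp; try ring
  have e3 : σ * ((δ - 1) / σ) = δ - 1 := by field_simp; try ring
  have e4 : σ * ((2 * δ - 1) / σ) = 2 * δ - 1 := by field_simp; try ring
  have e5 : σ * ((1 - 3 * δ) / σ) = 1 - 3 * δ := by field_simp; try ring
  have e6 : σ * (1 / σ) = 1 := by field_simp; try ring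
  have e7 : σ * ((1 - δ) / σ) = 1 - δ := by field_simp; try ring
  have lc : lam * c = lam ^ (1 - δ) := by
    rw [hc, lpow1, show (1:ℝ) + -δ = 1 - δ by ring]
  refine ⟨?_, ?_, ?_, ?_⟩
  · intro x hx
    have hx' : 0 ≤ c * x := mul_nonneg hc0.le hx
    rw [d3, d2, d1, hustar]
    simp only
    rw [heq (c * x) hx', hpow, hpow, hpow, hpow, hpow, e1, e2, e3, e4, e5]
    have a1 : lam ^ (-δ) * h ^ (-δ / σ) * x = h ^ (-δ / σ) * (c * x) := by
      rw [hc]; ring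
    have c2 : lam ^ (-1 : ℝ) * lam = 1 := by
      rw [rpow_neg_one]; exact inv_mul_cancel₀ hlam.ne'
    have a2 : lam ^ (-1 : ℝ) * h ^ (-1 / σ) * (lam * u (c * x)) =
        h ^ (-1 / σ) * u (c * x) := by
      calc lam ^ (-1 : ℝ) * h ^ (-1 / σ) * (lam * u (c * x))
          = (lam ^ (-1 : ℝ) * lam) * (h ^ (-1 / σ) * u (c * x)) := by ring
        _ = _ := by rw [c2, one_mul]
    have c3 : lam ^ (δ - 1) * (lam * c) = 1 := by
      rw [lc, lpow, show δ - 1 + (1 - δ) = 0 by ring, rpow_zero]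
    have a3 : lam ^ (δ - 1) * h ^ ((δ - 1) / σ) * (lam * c * deriv u (c * x)) =
        h ^ ((δ - 1) / σ) * deriv u (c * x) := by
      calc lam ^ (δ - 1) * h ^ ((δ - 1) / σ) * (lam * c * deriv u (c * x))
          = (lam ^ (δ - 1) * (lam * c)) * (h ^ ((δ - 1) / σ) * deriv u (c * x)) := by ring
        _ = _ := by rw [c3, one_mul]
    have c4 : lam ^ (2 * δ - 1) * (lam * c * c) = 1 := by
      rw [hc, lpow1, lpow, lpow, show 2 * δ - 1 + (1 + -δ + -δ) = 0 by ring, rpow_zero]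
    have a4 : lam ^ (2 * δ - 1) * h ^ ((2 * δ - 1) / σ) *
        (lam * c * c * deriv (deriv u) (c * x)) =
        h ^ ((2 * δ - 1) / σ) * deriv (deriv u) (c * x) := by
      calc lam ^ (2 * δ - 1) * h ^ ((2 * δ - 1) / σ) *
            (lam * c * c * deriv (deriv u) (c * x))
          = (lam ^ (2 * δ - 1) * (lam * c * c)) *
            (h ^ ((2 * δ - 1) / σ) * deriv (deriv u) (c * x)) := by ring
        _ = _ := by rw [c4, one_mul]
    rw [a1, a2, a3, a4]
    have coeff : lam * c * c * c = lam ^ (1 - 3 * δ) := by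
      rw [hc, lpow1, lpow, lpow, show (1:ℝ) + -δ + -δ + -δ = 1 - 3 * δ by ring]
    rw [← coeff]; ring
  · rw [hustar]
    simp only [mul_zero]
    rw [hic1, hpow, e6, Real.rpow_one]; ring
  · rw [d1]
    simp only [mul_zero]
    rw [hic2, hpow, e7, ← lc]; ring
  · intro L hL
    rw [d1]
    have h1 : Tendsto (fun x : ℝ => c * x) atTop atTop :=
      tendsto_atTop_atTop_of_monotone (fun a b hab => by nlinarith)
        (fun b => ⟨b / c, by rw [mul_div_cancel₀ _ hc0.ne']⟩)
    have h3 := (hL.comp h1).const_mul (lam * c)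
    rw [← lc]
    simpa [Function.comp] using h3
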